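/- Let T ≥ 3 be an integer, i₀ > 0 a real number, and i : ℝ → ℝ a function that is nonnegative, monotonically nondecreasing, convex, and differentiable on [0,∞). Let x ∈ ℝ^{T-1} be feasible with x_1 ≥ x_2 ≥ ⋯ ≥ x_{T-1} ≥ 0, and suppose x_k > 0 for some k with 2 ≤ k ≤ T−1. Then x is not a minimizer of C over the feasible set: there exists a feasible y with C(y) < C(x). -/

import Mathlib

/-- Partial information `D_t(x) = i₀ + ∑_{s=1}^{t} i(x_s)`. -/
noncomputable def Dinfo (i0 : ℝ) (i : ℝ → ℝ) (x : ℕ → ℝ) (t : ℕ) : ℝ :=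
  i0 + ∑ s ∈ Finset.Icc 1 t, i (x s)

/-- Cost `C(x) = ∑_{t=1}^{T-1} 1/D_t(x) + ∑_{t=1}^{T-1} x_t`. -/
noncomputable def cost (T : ℕ) (i0 : ℝ) (i : ℝ → ℝ) (x : ℕ → ℝ) : ℝ :=
  (∑ t ∈ Finset.Icc 1 (T - 1), 1 / Dinfo i0 i x t) + ∑ t ∈ Finset.Icc 1 (T - 1), x t

/-- Feasibility: `x_k ≥ 0` for `k = 1, …, T-1`. -/
def Feasible (T : ℕ) (x : ℕ → ℝ) : Prop :=
  ∀ k, 1 ≤ k → k ≤ T - 1 → 0 ≤ x k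

/-!
If `i (x k) = i 0`, setting `x k` to zero leaves every `D_t` unchanged and lowers the spending.
Otherwise move the whole excitation `x k` onto the first coordinate: the spending is unchanged,
`D_t` does not decrease for `t < k` by monotonicity, nor for `t ≥ k` by the superadditivity
`i b + i c ≤ i (b + c) + i 0` of a convex function, and `D_1` strictly increases.
-/

open Function

theorem ConvexOn.map_add_map_le_map_add_add_map_zero {f : ℝ → ℝ} (hf : ConvexOn ℝ (Set.Ici 0) f)
    {b c : ℝ} (hb : 0 ≤ b) (hc : 0 ≤ c) : f b + f c ≤ f (b + c) + f 0 := by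
  rcases hb.eq_or_lt with rfl | hb
  · simp [add_comm]
  rcases hc.eq_or_lt with rfl | hc
  · simp
  have hbc : 0 < b + c := add_pos hb hc
  have hcb := hf.secant_mono_aux1 Set.self_mem_Ici hbc.le hc (lt_add_of_pos_left c hb)
  have hbb := hf.secant_mono_aux1 Set.self_mem_Ici hbc.le hb (lt_add_of_pos_right b hc)
  refine le_of_mul_le_mul_left ?_ hbc
  linarith

theorem sum_le_sum_of_pair_le {ι M : Type*} [DecidableEq ι] [AddCommMonoid M] [PartialOrder M]
    [IsOrderedAddMonoid M] {s : Finset ι} {a b : ι} {f g : ι → M} (hab : a ≠ b) (ha : a ∈ s)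
    (hb : b ∈ s) (hpair : f a + f b ≤ g a + g b) (hrest : ∀ j ∈ s, j ≠ a → j ≠ b → f j = g j) :
    ∑ j ∈ s, f j ≤ ∑ j ∈ s, g j := by
  have hsub : {a, b} ⊆ s := Finset.insert_subset ha (Finset.singleton_subset_iff.2 hb)
  rw [← Finset.sum_sdiff hsub, ← Finset.sum_sdiff hsub (f := g), Finset.sum_pair hab,
    Finset.sum_pair hab]
  refine add_le_add (le_of_eq (Finset.sum_congr rfl fun j hj => ?_)) hpair
  simp only [Finset.mem_sdiff, Finset.mem_insert, Finset.mem_singleton, not_or] at hj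
  exact hrest j hj.1 hj.2.1 hj.2.2

section Cost

variable {T : ℕ} {i0 : ℝ} {i : ℝ → ℝ} {x y : ℕ → ℝ}

theorem Feasible.update (hx : Feasible T x) (k : ℕ) {v : ℝ} (hv : 0 ≤ v) :
    Feasible T (update x k v) := by
  intro j hj1 hj2
  rcases eq_or_ne j k with rfl | hjk
  · simpa using hv
  · simpa [update_of_ne hjk] using hx j hj1 hj2

theorem Dinfo_pos (hi0 : 0 < i0) (hnonneg : ∀ y, 0 ≤ y → 0 ≤ i y) (hx : Feasible T x) {t : ℕ}
    (ht : t ≤ T - 1) : 0 < Dinfo i0 i x t :=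
  add_pos_of_pos_of_nonneg hi0 <| Finset.sum_nonneg fun s hs =>
    hnonneg _ (hx s (Finset.mem_Icc.1 hs).1 ((Finset.mem_Icc.1 hs).2.trans ht))

theorem Dinfo_update_of_apply_eq {k : ℕ} {v : ℝ} (hv : i v = i (x k)) (t : ℕ) :
    Dinfo i0 i (update x k v) t = Dinfo i0 i x t := by
  unfold Dinfo
  congr 1
  refine Finset.sum_congr rfl fun s _ => ?_
  rcases eq_or_ne s k with rfl | hsk
  · simpa using hv
  · rw [update_of_ne hsk]

theorem cost_lt_cost_of_Dinfo_le (hpos : ∀ t ∈ Finset.Icc 1 (T - 1), 0 < Dinfo i0 i x t)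
    (hD : ∀ t ∈ Finset.Icc 1 (T - 1), Dinfo i0 i x t ≤ Dinfo i0 i y t)
    (hsum : ∑ t ∈ Finset.Icc 1 (T - 1), y t ≤ ∑ t ∈ Finset.Icc 1 (T - 1), x t)
    (hstrict : (∃ t ∈ Finset.Icc 1 (T - 1), Dinfo i0 i x t < Dinfo i0 i y t) ∨
      ∑ t ∈ Finset.Icc 1 (T - 1), y t < ∑ t ∈ Finset.Icc 1 (T - 1), x t) :
    cost T i0 i y < cost T i0 i x := by
  have hrecip : ∀ t ∈ Finset.Icc 1 (T - 1), 1 / Dinfo i0 i y t ≤ 1 / Dinfo i0 i x t :=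
    fun t ht => one_div_le_one_div_of_le (hpos t ht) (hD t ht)
  unfold cost
  rcases hstrict with ⟨t, ht, hlt⟩ | hlt
  · exact add_lt_add_of_lt_of_le
      (Finset.sum_lt_sum hrecip ⟨t, ht, one_div_lt_one_div_of_lt (hpos t ht) hlt⟩) hsum
  · exact add_lt_add_of_le_of_lt (Finset.sum_le_sum hrecip) hlt

theorem sum_update_lt_sum {s : Finset ℕ} {k : ℕ} {v : ℝ} (hk : k ∈ s) (hv : v < x k) :
    ∑ j ∈ s, update x k v j < ∑ j ∈ s, x j := by
  rw [Finset.sum_update_of_mem hk, Finset.sum_eq_add_sum_sdiff_singleton_of_mem hk]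
  exact add_lt_add_of_lt_of_le hv le_rfl

noncomputable def shiftToFirst (x : ℕ → ℝ) (k : ℕ) : ℕ → ℝ :=
  update (update x 1 (x 1 + x k)) k 0

variable {k : ℕ}

theorem shiftToFirst_apply_one (hk : k ≠ 1) : shiftToFirst x k 1 = x 1 + x k := by
  simp [shiftToFirst, update_of_ne hk.symm]

theorem shiftToFirst_apply_self : shiftToFirst x k k = 0 := by
  simp [shiftToFirst]

theorem shiftToFirst_apply_of_ne {j : ℕ} (hj1 : j ≠ 1) (hjk : j ≠ k) :
    shiftToFirst x k j = x j := by
  simp [shiftToFirst, update_of_ne hj1, update_of_ne hjk]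

theorem Feasible.shiftToFirst (hx : Feasible T x) (hk1 : 1 ≤ k) (hkT : k ≤ T - 1) :
    Feasible T (shiftToFirst x k) :=
  (hx.update 1 (add_nonneg (hx 1 le_rfl (hk1.trans hkT)) (hx k hk1 hkT))).update k le_rfl

theorem sum_shiftToFirst_le {s : Finset ℕ} (hk : k ≠ 1) (h1 : 1 ∈ s) (hks : k ∈ s) :
    ∑ j ∈ s, shiftToFirst x k j ≤ ∑ j ∈ s, x j :=
  sum_le_sum_of_pair_le hk.symm h1 hks
    (by rw [shiftToFirst_apply_one hk, shiftToFirst_apply_self, add_zero])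
    fun _ _ hj1 hjk => shiftToFirst_apply_of_ne hj1 hjk

theorem Dinfo_le_Dinfo_shiftToFirst (hmono : MonotoneOn i (Set.Ici 0))
    (hconv : ConvexOn ℝ (Set.Ici 0) i) (hx1 : 0 ≤ x 1) (hxk : 0 ≤ x k) (hk : 1 < k) {t : ℕ}
    (ht : 1 ≤ t) : Dinfo i0 i x t ≤ Dinfo i0 i (shiftToFirst x k) t := by
  refine add_le_add_right ?_ i0
  by_cases hkt : k ≤ t
  · refine sum_le_sum_of_pair_le hk.ne (Finset.mem_Icc.2 ⟨le_rfl, ht⟩)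
      (Finset.mem_Icc.2 ⟨hk.le, hkt⟩) ?_ fun j _ hj1 hjk => by
        rw [shiftToFirst_apply_of_ne hj1 hjk]
    rw [shiftToFirst_apply_one hk.ne', shiftToFirst_apply_self]
    exact hconv.map_add_map_le_map_add_add_map_zero hx1 hxk
  · refine Finset.sum_le_sum fun j hj => ?_
    rcases eq_or_ne j 1 with rfl | hj1
    · rw [shiftToFirst_apply_one hk.ne']
      exact hmono hx1 (add_nonneg hx1 hxk) (le_add_of_nonneg_right hxk)
    · have hjk : j < k := (Finset.mem_Icc.1 hj).2.trans_lt (not_le.1 hkt)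
      rw [shiftToFirst_apply_of_ne hj1 hjk.ne]

theorem Dinfo_one_lt_Dinfo_shiftToFirst (hconv : ConvexOn ℝ (Set.Ici 0) i) (hx1 : 0 ≤ x 1)
    (hxk : 0 ≤ x k) (hk : k ≠ 1) (hrise : i 0 < i (x k)) :
    Dinfo i0 i x 1 < Dinfo i0 i (shiftToFirst x k) 1 := by
  simp only [Dinfo, Finset.Icc_self, Finset.sum_singleton, shiftToFirst_apply_one hk]
  linarith [hconv.map_add_map_le_map_add_add_map_zero hx1 hxk]

end Cost

theorem ordered_with_late_excitation_not_minimizer_general (T : ℕ) (i0 : ℝ)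
    (hi0 : 0 < i0) (i : ℝ → ℝ)
    (hnonneg : ∀ y, 0 ≤ y → 0 ≤ i y)
    (hmono : ∀ a b, 0 ≤ a → a ≤ b → i a ≤ i b)
    (hconv : ConvexOn ℝ (Set.Ici 0) i)
    (x : ℕ → ℝ) (hfeas : Feasible T x)
    (k : ℕ) (hk1 : 2 ≤ k) (hk2 : k ≤ T - 1) (hkpos : 0 < x k) :
    ∃ y, Feasible T y ∧ cost T i0 i y < cost T i0 i x := by
  have hk : k ≠ 1 := by omega
  have h1mem : 1 ∈ Finset.Icc 1 (T - 1) := Finset.mem_Icc.2 ⟨le_rfl, by omega⟩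
  have hkmem : k ∈ Finset.Icc 1 (T - 1) := Finset.mem_Icc.2 ⟨by omega, hk2⟩
  have hpos : ∀ t ∈ Finset.Icc 1 (T - 1), 0 < Dinfo i0 i x t :=
    fun t ht => Dinfo_pos hi0 hnonneg hfeas (Finset.mem_Icc.1 ht).2
  have hx1 : 0 ≤ x 1 := hfeas 1 le_rfl (by omega)
  rcases (hmono 0 (x k) le_rfl hkpos.le).eq_or_lt with hflat | hrise
  · have hsum := sum_update_lt_sum hkmem hkpos
    exact ⟨update x k 0, hfeas.update k le_rfl, cost_lt_cost_of_Dinfo_le hpos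
      (fun t _ => (Dinfo_update_of_apply_eq hflat t).ge) hsum.le (Or.inr hsum)⟩
  · refine ⟨shiftToFirst x k, hfeas.shiftToFirst (by omega) hk2,
      cost_lt_cost_of_Dinfo_le hpos (fun t ht => ?_) (sum_shiftToFirst_le hk h1mem hkmem)
      (Or.inl ⟨1, h1mem, Dinfo_one_lt_Dinfo_shiftToFirst hconv hx1 hkpos.le hk hrise⟩)⟩
    exact Dinfo_le_Dinfo_shiftToFirst (fun a ha b _ hab => hmono a b ha hab) hconv hx1 hkpos.le
      hk1 (Finset.mem_Icc.1 ht).1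

theorem ordered_with_late_excitation_not_minimizer (T : ℕ) (hT : 3 ≤ T) (i0 : ℝ)
    (hi0 : 0 < i0) (i : ℝ → ℝ)
    (hnonneg : ∀ y, 0 ≤ y → 0 ≤ i y)
    (hmono : ∀ a b, 0 ≤ a → a ≤ b → i a ≤ i b)
    (hconv : ConvexOn ℝ (Set.Ici 0) i)
    (hdiff : DifferentiableOn ℝ i (Set.Ici 0))
    (x : ℕ → ℝ) (hfeas : Feasible T x)
    (hord : ∀ k, 1 ≤ k → k + 1 ≤ T - 1 → x (k + 1) ≤ x k)
    (k : ℕ) (hk1 : 2 ≤ k) (hk2 : k ≤ T - 1) (hkpos : 0 < x k) :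
    ∃ y, Feasible T y ∧ cost T i0 i y < cost T i0 i x :=
  ordered_with_late_excitation_not_minimizer_general T i0 hi0 i hnonneg hmono hconv x hfeas k hk1
    hk2 hkpos
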